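/- arXiv:1508.05860 — 3 statements merged into one kernel-verified Lean document; each statement's English description precedes it below -/
import Mathlib

section
/- Let m ≥ 1 be an integer, let 0 < i ≤ j be real numbers, let k ∈ SO(3m), and for s > 0 let Δ_s ∈ SL(3m,ℝ) denote the diagonal matrix whose first m diagonal entries equal e^{2s} and whose remaining 2m diagonal entries equal e^{−s}. Set g = Δ_i · k · Δ_j · k⁻¹ ∈ SL(3m,ℝ). Then: (a) ‖g⁻¹‖ ≤ e^{i+j}, where ‖·‖ is the operator norm with respect to the Euclidean norm on ℝ^{3m}; (b) the subspace W = E ∩ k·E, where E = span{e_{m+1},…,e_{3m}} is spanned by the last 2m standard basis vectors, has dimension at least m, and g x = e^{−(i+j)} x for every x ∈ W; (c) ‖g x‖ ≥ e^{2j−i}·‖x‖ for every x in the image k·span{e₁,…,e_m} of the span of the first m standard basis vectors, and in particular ‖g x‖ > ‖x‖ for every nonzero such x. -/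
/-!
Since `Δ_j` is the scalar `e^{-j}` on `E`, the matrix `g = Δ_i k Δ_j k⁻¹` equals `e^{-j} Δ_i` on
`k·E`, hence the scalar `e^{-(i+j)}` on `E ∩ k·E`, which has dimension at least `2m + 2m - 3m`.
Likewise `g = e^{2j} Δ_i` on `k·span{e₁,…,e_m}`, and `Δ_i` shrinks no vector by more than `e^{-i}`.
Finally `g⁻¹ = k Δ_{-j} kᵀ Δ_{-i}`, the `L²` operator norm is invariant under multiplication by the
orthogonal matrix `k`, and `‖Δ_{-s}‖ = e^s` for `s ≥ 0`.
-/

open Matrix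

noncomputable section

abbrev Mat (n : ℕ) := Matrix (Fin n) (Fin n) ℝ

/-- Operator norm of a matrix, acting on Euclidean space. -/
def opNorm {n : ℕ} (A : Mat n) : ℝ :=
  ‖LinearMap.toContinuousLinearMap (Matrix.toEuclideanLin A)‖

/-- The diagonal matrix `Δ_s`: first `m` entries `e^{2s}`, last `2m` entries `e^{−s}`. -/
def Delta (m : ℕ) (s : ℝ) : Mat (3 * m) :=
  Matrix.diagonal fun l => if (l : ℕ) < m then Real.exp (2 * s) else Real.exp (-s)

/-- The span `E` of the last `2m` standard basis vectors of `ℝ^{3m}`. -/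
def lastCoords (m : ℕ) : Submodule ℝ (EuclideanSpace ℝ (Fin (3 * m))) where
  carrier := {x | ∀ l : Fin (3 * m), (l : ℕ) < m → x l = 0}
  add_mem' := by
    intro x y hx hy l hl
    show x l + y l = 0
    rw [hx l hl, hy l hl, add_zero]
  zero_mem' := by intro l hl; rfl
  smul_mem' := by
    intro c x hx l hl
    show c * x l = 0
    rw [hx l hl, mul_zero]

/-- The span of the first `m` standard basis vectors of `ℝ^{3m}`. -/
def firstCoords (m : ℕ) : Submodule ℝ (EuclideanSpace ℝ (Fin (3 * m))) where
  carrier := {x | ∀ l : Fin (3 * m), m ≤ (l : ℕ) → x l = 0}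
  add_mem' := by
    intro x y hx hy l hl
    show x l + y l = 0
    rw [hx l hl, hy l hl, add_zero]
  zero_mem' := by intro l hl; rfl
  smul_mem' := by
    intro c x hx l hl
    show c * x l = 0
    rw [hx l hl, mul_zero]

open scoped Matrix.Norms.L2Operator

section EuclideanLin

variable {𝕜 n : Type*} [RCLike 𝕜] [Fintype n] [DecidableEq n]

lemma Matrix.toEuclideanLin_mul_apply (A B : Matrix n n 𝕜) (x : EuclideanSpace 𝕜 n) :
    toEuclideanLin (A * B) x = toEuclideanLin A (toEuclideanLin B x) := by
  simp

lemma Matrix.norm_toEuclideanLin_apply_le (A : Matrix n n 𝕜) (x : EuclideanSpace 𝕜 n) :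
    ‖toEuclideanLin A x‖ ≤ ‖A‖ * ‖x‖ :=
  (toEuclideanCLM (n := n) (𝕜 := 𝕜) A).le_opNorm x

lemma Matrix.toEuclideanLin_conj_apply {A B k k' : Matrix n n 𝕜} (hk : k' * k = 1)
    (y : EuclideanSpace 𝕜 n) :
    toEuclideanLin (A * k * B * k') (toEuclideanLin k y) =
      toEuclideanLin A (toEuclideanLin k (toEuclideanLin B y)) := by
  simp only [← toEuclideanLin_mul_apply, Matrix.mul_assoc, hk, Matrix.mul_one]

lemma Matrix.toEuclideanLin_injective_of_mul_eq_one {k k' : Matrix n n 𝕜} (hk : k' * k = 1) :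
    Function.Injective (toEuclideanLin k) :=
  Function.LeftInverse.injective (g := toEuclideanLin k') fun x => by
    rw [← toEuclideanLin_mul_apply, hk]; simp

end EuclideanLin

lemma opNorm_eq_norm {n : ℕ} (A : Mat n) : opNorm A = ‖A‖ := rfl

lemma Submodule.finrank_add_finrank_le_finrank_inf_add {K V : Type*} [DivisionRing K]
    [AddCommGroup V] [Module K V] [FiniteDimensional K V] (U W : Submodule K V) :
    Module.finrank K U + Module.finrank K W ≤ Module.finrank K ↥(U ⊓ W) + Module.finrank K V := by
  have := Submodule.finrank_sup_add_finrank_inf_eq U W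
  have := Submodule.finrank_le (U ⊔ W)
  omega

section Delta

variable {m : ℕ}

lemma Delta_mul_Delta_neg (s : ℝ) : Delta m s * Delta m (-s) = 1 := by
  rw [Delta, Delta, diagonal_mul_diagonal, ← diagonal_one]
  congr 1
  funext l
  split_ifs <;> simp [← Real.exp_add]

lemma Delta_inv (s : ℝ) : (Delta m s)⁻¹ = Delta m (-s) :=
  inv_eq_right_inv (Delta_mul_Delta_neg s)

lemma norm_Delta_neg_le {s : ℝ} (hs : 0 ≤ s) : ‖Delta m (-s)‖ ≤ Real.exp s := by
  rw [Delta, l2_opNorm_diagonal, pi_norm_le_iff_of_nonneg (Real.exp_nonneg s)]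
  intro l
  split_ifs
  · rw [Real.norm_of_nonneg (Real.exp_nonneg _), Real.exp_le_exp]
    linarith
  · simp

lemma exp_neg_mul_norm_le_norm_Delta_apply {s : ℝ} (hs : 0 ≤ s)
    (x : EuclideanSpace ℝ (Fin (3 * m))) :
    Real.exp (-s) * ‖x‖ ≤ ‖toEuclideanLin (Delta m s) x‖ := by
  have hinv : Delta m (-s) * Delta m s = 1 := by simpa using Delta_mul_Delta_neg (m := m) (-s)
  have key : ‖x‖ ≤ Real.exp s * ‖toEuclideanLin (Delta m s) x‖ := calc
    ‖x‖ = ‖toEuclideanLin (Delta m (-s)) (toEuclideanLin (Delta m s) x)‖ := by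
      rw [← toEuclideanLin_mul_apply, hinv]
      simp
    _ ≤ Real.exp s * ‖toEuclideanLin (Delta m s) x‖ :=
      (norm_toEuclideanLin_apply_le _ _).trans (by gcongr; exact norm_Delta_neg_le hs)
  rw [Real.exp_neg, inv_mul_le_iff₀ (Real.exp_pos s)]
  exact key

lemma toEuclideanLin_Delta_of_mem_lastCoords (s : ℝ) {y : EuclideanSpace ℝ (Fin (3 * m))}
    (hy : y ∈ lastCoords m) : toEuclideanLin (Delta m s) y = Real.exp (-s) • y := by
  ext l
  simp only [Delta, toLpLin_apply, mulVec_diagonal, PiLp.smul_apply, smul_eq_mul]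
  split_ifs with hl
  · simp [hy l hl]
  · rfl

lemma toEuclideanLin_Delta_of_mem_firstCoords (s : ℝ) {y : EuclideanSpace ℝ (Fin (3 * m))}
    (hy : y ∈ firstCoords m) : toEuclideanLin (Delta m s) y = Real.exp (2 * s) • y := by
  ext l
  simp only [Delta, toLpLin_apply, mulVec_diagonal, PiLp.smul_apply, smul_eq_mul]
  split_ifs with hl
  · rfl
  · simp [hy l (not_lt.mp hl)]

lemma two_mul_le_finrank_lastCoords : 2 * m ≤ Module.finrank ℝ (lastCoords m) := by
  let π : EuclideanSpace ℝ (Fin (3 * m)) →ₗ[ℝ] (Fin m → ℝ) :=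
    LinearMap.pi fun l => (EuclideanSpace.proj (Fin.castLE (by omega) l) :
      EuclideanSpace ℝ (Fin (3 * m)) →L[ℝ] ℝ).toLinearMap
  have hker : LinearMap.ker π ≤ lastCoords m := fun x hx l hl =>
    congrFun (LinearMap.mem_ker.mp hx) ⟨l, hl⟩
  have hrank := LinearMap.finrank_range_add_finrank_ker π
  have hrange := Submodule.finrank_le (LinearMap.range π)
  have := Submodule.finrank_mono hker
  simp only [finrank_euclideanSpace_fin, Module.finrank_fin_fun] at hrank hrange
  omega

end Delta

lemma Matrix.mem_unitary_of_transpose_mul_self {n : Type*} [Fintype n] [DecidableEq n]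
    {k : Matrix n n ℝ} (hk : kᵀ * k = 1) : k ∈ unitary (Matrix n n ℝ) := by
  rw [Unitary.mem_iff, star_eq_conjTranspose, conjTranspose_eq_transpose_of_trivial]
  exact ⟨hk, mul_eq_one_comm.mp hk⟩

section Conjugate

variable {m : ℕ} {i j : ℝ} {k : Mat (3 * m)}

lemma norm_inv_Delta_mul_conj_Delta_le (hi : 0 ≤ i) (hj : 0 ≤ j) (hk : kᵀ * k = 1) :
    ‖(Delta m i * k * Delta m j * k⁻¹)⁻¹‖ ≤ Real.exp (i + j) := by
  have hkinv : k⁻¹ = kᵀ := inv_eq_left_inv hk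
  have hkkT : k * kᵀ = 1 := mul_eq_one_comm.mp hk
  have hkTu : kᵀ ∈ unitary (Mat (3 * m)) :=
    mem_unitary_of_transpose_mul_self (by rwa [transpose_transpose])
  have hginv : (Delta m i * k * Delta m j * k⁻¹)⁻¹ = k * (Delta m (-j) * (kᵀ * Delta m (-i))) := by
    rw [Matrix.mul_inv_rev, Matrix.mul_inv_rev, Matrix.mul_inv_rev, hkinv, inv_eq_left_inv hkkT,
      Delta_inv, Delta_inv]
  calc ‖(Delta m i * k * Delta m j * k⁻¹)⁻¹‖
      = ‖Delta m (-j) * (kᵀ * Delta m (-i))‖ := by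
        rw [hginv, CStarRing.norm_mem_unitary_mul _ (mem_unitary_of_transpose_mul_self hk)]
    _ ≤ ‖Delta m (-j)‖ * ‖Delta m (-i)‖ :=
        (norm_mul_le _ _).trans_eq (by rw [CStarRing.norm_mem_unitary_mul _ hkTu])
    _ ≤ Real.exp j * Real.exp i := by
        gcongr
        exacts [norm_Delta_neg_le hj, norm_Delta_neg_le hi]
    _ = Real.exp (i + j) := by rw [← Real.exp_add, add_comm]

lemma le_finrank_lastCoords_inf_map (hk : Function.Injective (toEuclideanLin k)) :
    m ≤ Module.finrank ℝ ↥(lastCoords m ⊓ (lastCoords m).map (toEuclideanLin k)) := by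
  have hmap := (Submodule.equivMapOfInjective _ hk (lastCoords m)).finrank_eq
  have hinf := Submodule.finrank_add_finrank_le_finrank_inf_add (lastCoords m)
    ((lastCoords m).map (toEuclideanLin k))
  have := two_mul_le_finrank_lastCoords (m := m)
  rw [finrank_euclideanSpace_fin] at hinf
  omega

lemma toEuclideanLin_Delta_mul_conj_Delta_of_mem_inf (hk : k⁻¹ * k = 1)
    {x : EuclideanSpace ℝ (Fin (3 * m))}
    (hx : x ∈ lastCoords m ⊓ (lastCoords m).map (toEuclideanLin k)) :
    toEuclideanLin (Delta m i * k * Delta m j * k⁻¹) x = Real.exp (-(i + j)) • x := by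
  obtain ⟨hxE, y, hyE, rfl⟩ := hx
  rw [toEuclideanLin_conj_apply hk, toEuclideanLin_Delta_of_mem_lastCoords j hyE, map_smul,
    map_smul, toEuclideanLin_Delta_of_mem_lastCoords i hxE, smul_smul, ← Real.exp_add, neg_add,
    add_comm]

lemma exp_mul_norm_le_norm_Delta_mul_conj_Delta_apply (hi : 0 ≤ i) (hk : k⁻¹ * k = 1)
    {x : EuclideanSpace ℝ (Fin (3 * m))} (hx : x ∈ (firstCoords m).map (toEuclideanLin k)) :
    Real.exp (2 * j - i) * ‖x‖ ≤ ‖toEuclideanLin (Delta m i * k * Delta m j * k⁻¹) x‖ := by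
  obtain ⟨y, hyF, rfl⟩ := hx
  calc Real.exp (2 * j - i) * ‖toEuclideanLin k y‖
      = Real.exp (2 * j) * (Real.exp (-i) * ‖toEuclideanLin k y‖) := by
        rw [sub_eq_add_neg, Real.exp_add, mul_assoc]
    _ ≤ Real.exp (2 * j) * ‖toEuclideanLin (Delta m i) (toEuclideanLin k y)‖ := by
        gcongr
        exact exp_neg_mul_norm_le_norm_Delta_apply hi _
    _ = ‖toEuclideanLin (Delta m i * k * Delta m j * k⁻¹) (toEuclideanLin k y)‖ := by
        rw [toEuclideanLin_conj_apply hk, toEuclideanLin_Delta_of_mem_firstCoords j hyF, map_smul,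
          map_smul, norm_smul, Real.norm_of_nonneg (Real.exp_nonneg _)]

end Conjugate

theorem stmt7_general (m : ℕ) (i j : ℝ) (hi : 0 < i) (hij : i ≤ j)
    (k : Mat (3 * m)) (hkorth : kᵀ * k = 1) :
    opNorm ((Delta m i * k * Delta m j * k⁻¹)⁻¹) ≤ Real.exp (i + j) ∧
    (m ≤ Module.finrank ℝ
        ↥(lastCoords m ⊓ (lastCoords m).map (Matrix.toEuclideanLin k)) ∧
      ∀ x ∈ lastCoords m ⊓ (lastCoords m).map (Matrix.toEuclideanLin k),
        Matrix.toEuclideanLin (Delta m i * k * Delta m j * k⁻¹) x =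
          Real.exp (-(i + j)) • x) ∧
    (∀ x ∈ (firstCoords m).map (Matrix.toEuclideanLin k),
      Real.exp (2 * j - i) * ‖x‖ ≤
        ‖Matrix.toEuclideanLin (Delta m i * k * Delta m j * k⁻¹) x‖ ∧
      (x ≠ 0 → ‖x‖ < ‖Matrix.toEuclideanLin (Delta m i * k * Delta m j * k⁻¹) x‖)) := by
  have hj : 0 ≤ j := hi.le.trans hij
  have hk : k⁻¹ * k = 1 := by rwa [inv_eq_left_inv hkorth]
  refine ⟨(opNorm_eq_norm _).trans_le (norm_inv_Delta_mul_conj_Delta_le hi.le hj hkorth),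
    ⟨le_finrank_lastCoords_inf_map (toEuclideanLin_injective_of_mul_eq_one hk),
      fun x hx => toEuclideanLin_Delta_mul_conj_Delta_of_mem_inf hk hx⟩, fun x hx => ?_⟩
  have hlow := exp_mul_norm_le_norm_Delta_mul_conj_Delta_apply (j := j) hi.le hk hx
  refine ⟨hlow, fun hx0 => lt_of_lt_of_le ?_ hlow⟩
  exact lt_mul_of_one_lt_left (norm_pos_iff.mpr hx0) (Real.one_lt_exp_iff.mpr (by linarith))

/-- Claim used in Step 2 of Proposition 4.2: spectral properties of
`g = Δ_i·k·Δ_j·k⁻¹` for `k ∈ SO(3m)` and `0 < i ≤ j`. -/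
theorem stmt7 (m : ℕ) (hm : 1 ≤ m) (i j : ℝ) (hi : 0 < i) (hij : i ≤ j)
    (k : Mat (3 * m)) (hkorth : kᵀ * k = 1) (hkdet : k.det = 1) :
    opNorm ((Delta m i * k * Delta m j * k⁻¹)⁻¹) ≤ Real.exp (i + j) ∧
    (m ≤ Module.finrank ℝ
        ↥(lastCoords m ⊓ (lastCoords m).map (Matrix.toEuclideanLin k)) ∧
      ∀ x ∈ lastCoords m ⊓ (lastCoords m).map (Matrix.toEuclideanLin k),
        Matrix.toEuclideanLin (Delta m i * k * Delta m j * k⁻¹) x =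
          Real.exp (-(i + j)) • x) ∧
    (∀ x ∈ (firstCoords m).map (Matrix.toEuclideanLin k),
      Real.exp (2 * j - i) * ‖x‖ ≤
        ‖Matrix.toEuclideanLin (Delta m i * k * Delta m j * k⁻¹) x‖ ∧
      (x ≠ 0 → ‖x‖ < ‖Matrix.toEuclideanLin (Delta m i * k * Delta m j * k⁻¹) x‖)) :=
  stmt7_general m i j hi hij k hkorth
end
end

section
/- Let A be an associative unital topological ring admitting a compact subset Q with 1 ∈ Q and Q = −Q that generates A as a ring, let X be a Banach space, and let n ≥ 2. Let G' ≅ E(n,A) ⋉ Aⁿ and H' ≅ Aⁿ be realized inside E(n+1,A), and let G ≅ E(n+1,A) ⋉ A^{n+1} and H ≅ A^{n+1} be realized inside E(n+2,A), as described in the context. Set S' = {e_{i,j}(q) : q ∈ Q, i ≠ j} ∩ G' (elementary matrices of size n+1). Assume that the pair G' > H' has weak relative property (T_X) with respect to S', i.e.: for every isometric representation ρ of G' on X there exists ε > 0 such that sup_{s ∈ S'} ‖ρ(s)ξ − ξ‖ ≥ ε · sup_{h ∈ H'} ‖ρ(h)ξ − ξ‖ for every ξ ∈ X. Then the pair G >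 H has relative property (FF_X): for every isometric representation ρ of G on X and every quasi-1-cocycle c : G → X into ρ, one has sup_{h ∈ H} ‖c(h)‖ < ∞. -/
open Matrix

noncomputable section

abbrev MatA (n : ℕ) (A : Type*) [Ring A] := Matrix (Fin n) (Fin n) A

/-- The elementary matrix `e_{i,j}(a)`: identity with `a` in position `(i,j)`. -/
def elemMat (n : ℕ) (A : Type*) [Ring A] (i j : Fin n) (a : A) : MatA n A :=
  1 + Matrix.single i j a

/-- The elementary group `E(n,A)`: the subgroup of the invertible `n×n` matrices over `A`
generated by the elementary matrices `e_{i,j}(a)`, `i ≠ j`. -/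
def elemGrp (n : ℕ) (A : Type*) [Ring A] : Subgroup (MatA n A)ˣ :=
  Subgroup.closure {u | ∃ i j : Fin n, ∃ a : A, i ≠ j ∧ u.val = elemMat n A i j a}

/-- The copy of `E(n,A) ⋉ Aⁿ` inside `E(n+1,A)`: the subgroup generated by the elementary
matrices `e_{i,j}(a)` with `i ≠ j` and `i ≤ n` (i.e. `i` not the last index). -/
def upperGrp (n : ℕ) (A : Type*) [Ring A] : Subgroup (MatA (n + 1) A)ˣ :=
  Subgroup.closure
    {u | ∃ i j : Fin (n + 1), ∃ a : A, i ≠ j ∧ (i : ℕ) < n ∧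
      u.val = elemMat (n + 1) A i j a}

/-- The matrix with identity upper-left `n×n` block, last column `v` above the diagonal
entry `1`, and zero elsewhere. -/
def colMat (n : ℕ) (A : Type*) [Ring A] (v : Fin n → A) : MatA (n + 1) A :=
  Matrix.of fun i j =>
    (if i = j then 1 else 0) + (if h : (i : ℕ) < n ∧ (j : ℕ) = n then v ⟨i, h.1⟩ else 0)

/-- The copy of `Aⁿ` inside `E(n+1,A)`: matrices with identity upper-left block and
arbitrary last column. -/
def colSet (n : ℕ) (A : Type*) [Ring A] : Set (MatA (n + 1) A)ˣ :=
  {u | ∃ v : Fin n → A, u.val = colMat n A v}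

/-!
Bound `c` on each column subgroup `y_k(A)`, `y_k(a) = e_{k,n+1}(a)`; on the product `A^{n+1}` of
these subgroups the bound follows from almost additivity of `c`.

Inserting a trivial row and column at `k` embeds `E(n,A) ⋉ Aⁿ` into the centralizer of `y_k(A)`.
Elements commuting with `y_k(a)` move `c (y_k(a))` by at most `2‖c g‖ + 2Δ`, so the compact
generating set moves it by a bounded amount, and weak relative property (T) makes `c (y_k(a))`
almost invariant under `y_i(A)` for `i ≠ k`; via `y_k(b) = ⁅e_{k,k'}(1), y_{k'}(b)⁆` also under
`y_k(A)`. Almost invariance forces linear growth along powers, `c (y_k(a)^t) ≈ t • c (y_k(a))`,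
whereas `y_{k'}(t a) = ⁅e_{k',k}(t), y_k(a)⁆` gives `‖c (y_{k'}(t a))‖ ≤ 2‖c (y_k(a))‖ + O(t)`.
Applying the latter twice with `t = 3` yields `9‖c (y_k(a))‖ ≤ 4‖c (y_k(a))‖ + O(1)`.
-/

open scoped commutatorElement

section QuasiCocycle

variable {G X : Type*} [Group G] [NormedAddCommGroup X] [NormedSpace ℝ X]

def IsQuasiCocycle (ρ : G →* (X ≃ₗᵢ[ℝ] X)) (c : G → X) (Δ : ℝ) : Prop :=
  ∀ g h, ‖c (g * h) - c g - ρ g (c h)‖ ≤ Δ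

variable (ρ : G →* (X ≃ₗᵢ[ℝ] X))

lemma map_mul_apply (g h : G) (ξ : X) : ρ (g * h) ξ = ρ g (ρ h ξ) := by
  rw [map_mul]
  rfl

lemma norm_map_mul_apply_sub_le (g h : G) (ξ : X) :
    ‖ρ (g * h) ξ - ξ‖ ≤ ‖ρ g ξ - ξ‖ + ‖ρ h ξ - ξ‖ := by
  have : ρ (g * h) ξ - ξ = ρ g (ρ h ξ - ξ) + (ρ g ξ - ξ) := by
    rw [map_mul_apply, map_sub]
    abel
  rw [this, ← (ρ g).norm_map (ρ h ξ - ξ), add_comm ‖ρ g ξ - ξ‖]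
  exact norm_add_le _ _

lemma norm_map_inv_apply_sub (g : G) (ξ : X) : ‖ρ g⁻¹ ξ - ξ‖ = ‖ρ g ξ - ξ‖ := by
  rw [← (ρ g).norm_map, map_sub, ← map_mul_apply, mul_inv_cancel, map_one,
    LinearIsometryEquiv.coe_one, id, norm_sub_rev]

lemma norm_map_commutatorElement_apply_sub_le (g h : G) (ξ : X) :
    ‖ρ ⁅g, h⁆ ξ - ξ‖ ≤ 2 * ‖ρ g ξ - ξ‖ + 2 * ‖ρ h ξ - ξ‖ := by
  have h₁ := norm_map_mul_apply_sub_le ρ (g * h * g⁻¹) h⁻¹ ξ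
  have h₂ := norm_map_mul_apply_sub_le ρ (g * h) g⁻¹ ξ
  have h₃ := norm_map_mul_apply_sub_le ρ g h ξ
  rw [norm_map_inv_apply_sub] at h₁ h₂
  rw [commutatorElement_def]
  linarith

namespace IsQuasiCocycle

variable {ρ} {c : G → X} {Δ : ℝ} (hc : IsQuasiCocycle ρ c Δ)
include hc

lemma norm_one_le : ‖c 1‖ ≤ Δ := by
  simpa using hc 1 1

lemma nonneg : 0 ≤ Δ := (norm_nonneg _).trans hc.norm_one_le

lemma norm_mul_le (g h : G) : ‖c (g * h)‖ ≤ ‖c g‖ + ‖c h‖ + Δ := by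
  calc ‖c (g * h)‖ = ‖c g + ρ g (c h) + (c (g * h) - c g - ρ g (c h))‖ := by abel_nf
    _ ≤ ‖c g‖ + ‖ρ g (c h)‖ + ‖c (g * h) - c g - ρ g (c h)‖ := norm_add₃_le
    _ ≤ ‖c g‖ + ‖c h‖ + Δ := by rw [(ρ g).norm_map]; linarith [hc g h]

lemma norm_inv_le (g : G) : ‖c g⁻¹‖ ≤ ‖c g‖ + 2 * Δ := by
  have h₁ := hc g⁻¹ g
  rw [inv_mul_cancel] at h₁
  calc ‖c g⁻¹‖ = ‖c 1 + -(c 1 - c g⁻¹ - ρ g⁻¹ (c g)) + -ρ g⁻¹ (c g)‖ := by abel_nf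
    _ ≤ ‖c 1‖ + ‖-(c 1 - c g⁻¹ - ρ g⁻¹ (c g))‖ + ‖-ρ g⁻¹ (c g)‖ := norm_add₃_le
    _ ≤ ‖c g‖ + 2 * Δ := by
        rw [norm_neg, norm_neg, (ρ g⁻¹).norm_map]; linarith [hc.norm_one_le]

lemma norm_pow_le (g : G) (t : ℕ) : ‖c (g ^ t)‖ ≤ t * (‖c g‖ + Δ) + Δ := by
  induction t with
  | zero => simpa using hc.norm_one_le
  | succ t ih =>
    rw [pow_succ, Nat.cast_succ]
    linarith [hc.norm_mul_le (g ^ t) g]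

lemma norm_commutatorElement_le (g h : G) : ‖c ⁅g, h⁆‖ ≤ 2 * ‖c g‖ + 2 * ‖c h‖ + 7 * Δ := by
  rw [commutatorElement_def]
  linarith [hc.norm_mul_le (g * h * g⁻¹) h⁻¹, hc.norm_mul_le (g * h) g⁻¹, hc.norm_mul_le g h,
    hc.norm_inv_le g, hc.norm_inv_le h]

lemma norm_map_apply_sub_le_of_commute {g h : G} (hgh : Commute g h) :
    ‖ρ g (c h) - c h‖ ≤ 2 * ‖c g‖ + 2 * Δ := by
  have h₁ := hc g h
  rw [hgh.eq] at h₁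
  calc ‖ρ g (c h) - c h‖
      = ‖(c (h * g) - c h - ρ h (c g)) + -(c (h * g) - c g - ρ g (c h)) + (ρ h (c g) + -c g)‖ := by
        abel_nf
    _ ≤ ‖c (h * g) - c h - ρ h (c g)‖ + ‖-(c (h * g) - c g - ρ g (c h))‖
        + ‖ρ h (c g) + -c g‖ := norm_add₃_le
    _ ≤ Δ + Δ + (‖ρ h (c g)‖ + ‖-c g‖) := by
        gcongr
        · exact hc h g
        · rw [norm_neg]; exact h₁
        · exact norm_add_le _ _
    _ = 2 * ‖c g‖ + 2 * Δ := by rw [(ρ h).norm_map, norm_neg]; ring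

lemma norm_sub_nsmul_le {g : G} {β : ℝ} (hβ : ∀ t : ℕ, ‖ρ (g ^ t) (c g) - c g‖ ≤ β) (t : ℕ) :
    ‖c (g ^ t) - (t : ℝ) • c g‖ ≤ t * (Δ + β) + Δ := by
  induction t with
  | zero => simpa using hc.norm_one_le
  | succ t ih =>
    calc ‖c (g ^ (t + 1)) - ((t + 1 : ℕ) : ℝ) • c g‖
        = ‖(c (g ^ t * g) - c (g ^ t) - ρ (g ^ t) (c g)) + (ρ (g ^ t) (c g) - c g)
            + (c (g ^ t) - (t : ℝ) • c g)‖ := by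
          rw [pow_succ, Nat.cast_succ, add_smul, one_smul]; abel_nf
      _ ≤ _ := norm_add₃_le
      _ ≤ (t + 1 : ℕ) * (Δ + β) + Δ := by push_cast; linarith [hc (g ^ t) g, hβ t]

lemma natCast_mul_norm_le {g : G} {β : ℝ} (hβ : ∀ t : ℕ, ‖ρ (g ^ t) (c g) - c g‖ ≤ β) (t : ℕ) :
    t * ‖c g‖ ≤ ‖c (g ^ t)‖ + t * (Δ + β) + Δ := by
  have := norm_sub_norm_le ((t : ℝ) • c g) (c (g ^ t))
  rw [norm_smul, Real.norm_natCast, norm_sub_rev] at this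
  linarith [hc.norm_sub_nsmul_le hβ t]

lemma norm_list_prod_le {K : ℝ} {l : List G}
    (hK : ∀ g ∈ l, ‖c g‖ ≤ K) : ‖c l.prod‖ ≤ l.length * (K + Δ) + Δ := by
  induction l with
  | nil => simpa using hc.norm_one_le
  | cons g l ih =>
    rw [List.prod_cons, List.length_cons, Nat.cast_succ]
    linarith [hc.norm_mul_le g l.prod, hK g List.mem_cons_self,
      ih fun g hg => hK g (List.mem_cons_of_mem _ hg)]

end IsQuasiCocycle

end QuasiCocycle

section ElementaryMatrices

variable {A : Type*} [Ring A] {m : ℕ}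

lemma elemMat_mul_elemMat_same {i j : Fin m} (hij : i ≠ j) (a b : A) :
    elemMat m A i j a * elemMat m A i j b = elemMat m A i j (a + b) := by
  simp only [elemMat, mul_add, add_mul, one_mul, mul_one,
    single_mul_single_of_ne _ _ _ _ hij.symm, single_add]
  abel

lemma elemMat_commute {i j p r : Fin m} (hjp : j ≠ p) (hri : r ≠ i) (a b : A) :
    Commute (elemMat m A i j a) (elemMat m A p r b) := by
  simp only [Commute, SemiconjBy, elemMat, mul_add, add_mul, one_mul, mul_one,
    single_mul_single_of_ne _ _ _ _ hjp, single_mul_single_of_ne _ _ _ _ hri]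
  abel

lemma elemMat_zero (i j : Fin m) : elemMat m A i j 0 = 1 := by
  simp [elemMat]

def elemUnit {i j : Fin m} (hij : i ≠ j) (a : A) : (MatA m A)ˣ where
  val := elemMat m A i j a
  inv := elemMat m A i j (-a)
  val_inv := by rw [elemMat_mul_elemMat_same hij, add_neg_cancel, elemMat_zero]
  inv_val := by rw [elemMat_mul_elemMat_same hij, neg_add_cancel, elemMat_zero]

lemma elemUnit_commutator {i j p : Fin m} (hij : i ≠ j) (hjp : j ≠ p) (hip : i ≠ p) (a b : A) :
    ⁅elemUnit hij a, elemUnit hjp b⁆ = elemUnit hip (a * b) := by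
  ext : 1
  simp only [commutatorElement_def, Units.val_mul, elemUnit, Units.inv_mk, elemMat, mul_add,
    add_mul, one_mul, mul_one, single_mul_single_same, single_mul_single_of_ne _ _ _ _ hij.symm,
    single_mul_single_of_ne _ _ _ _ hjp.symm, single_mul_single_of_ne _ _ _ _ hip.symm,
    add_zero, mul_neg, neg_mul, ← single_neg]
  abel

variable (A) in
def elem (i : Fin m) {j : Fin (m + 1)} (hij : i.castSucc ≠ j) (a : A) : upperGrp m A :=
  ⟨elemUnit hij a, Subgroup.subset_closure ⟨_, _, a, hij, i.isLt, rfl⟩⟩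

variable (A) in
def colElem (k : Fin m) (a : A) : upperGrp m A := elem A k (Fin.castSucc_ne_last k) a

lemma elem_mul_elem (i : Fin m) {j : Fin (m + 1)} (hij : i.castSucc ≠ j) (a b : A) :
    elem A i hij a * elem A i hij b = elem A i hij (a + b) :=
  Subtype.ext <| Units.ext <| elemMat_mul_elemMat_same hij a b

lemma elem_pow (i : Fin m) {j : Fin (m + 1)} (hij : i.castSucc ≠ j) (a : A) (t : ℕ) :
    elem A i hij a ^ t = elem A i hij (t • a) := by
  induction t with
  | zero => rw [pow_zero, zero_smul]; exact Subtype.ext <| Units.ext (elemMat_zero _ _).symm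
  | succ t ih => rw [pow_succ, ih, elem_mul_elem, succ_nsmul]

lemma elem_commute {i p : Fin m} {j r : Fin (m + 1)} (hij : i.castSucc ≠ j) (hpr : p.castSucc ≠ r)
    (hjp : j ≠ p.castSucc) (hri : r ≠ i.castSucc) (a b : A) :
    Commute (elem A i hij a) (elem A p hpr b) :=
  Subtype.ext <| Units.ext <| elemMat_commute hjp hri a b

lemma elem_commutator {i j : Fin m} {p : Fin (m + 1)} (hij : i.castSucc ≠ j.castSucc)
    (hjp : j.castSucc ≠ p) (hip : i.castSucc ≠ p) (a b : A) :
    ⁅elem A i hij a, elem A j hjp b⁆ = elem A i hip (a * b) :=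
  Subtype.ext <| elemUnit_commutator hij hjp hip a b

lemma continuous_elem [TopologicalSpace A] [IsTopologicalRing A] (i : Fin m) {j : Fin (m + 1)}
    (hij : i.castSucc ≠ j) : Continuous (elem A i hij) := by
  refine Continuous.subtype_mk (Units.continuous_iff.2 ⟨?_, ?_⟩) _ <;>
    refine continuous_matrix fun p q => ?_ <;>
    simp only [Function.comp_apply, elemUnit, Units.inv_mk, elemMat, Matrix.add_apply, single_apply]
    <;> split_ifs <;> fun_prop

lemma exists_norm_elem_le {X : Type*} [NormedAddCommGroup X] [TopologicalSpace A]
    [IsTopologicalRing A] {Q : Set A}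
    (hQ : IsCompact Q) {c : upperGrp m A → X} (hc : Continuous c) :
    ∃ L, 0 ≤ L ∧ ∀ i j (h : Fin.castSucc i ≠ j), ∀ q ∈ Q, ‖c (elem A i h q)‖ ≤ L := by
  have hK : IsCompact (⋃ (i : Fin m) (j : Fin (m + 1)) (h : i.castSucc ≠ j), elem A i h '' Q) :=
    isCompact_iUnion fun i => isCompact_iUnion fun j => isCompact_iUnion fun h =>
      hQ.image (continuous_elem i h)
  obtain ⟨L, hL⟩ := hK.exists_bound_of_continuousOn hc.continuousOn
  refine ⟨max L 0, le_max_right _ _, fun i j h q hq => (hL _ ?_).trans (le_max_left _ _)⟩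
  exact Set.mem_iUnion₂.2 ⟨i, j, Set.mem_iUnion.2 ⟨h, Set.mem_image_of_mem _ hq⟩⟩

end ElementaryMatrices

section ColumnMatrices

variable {A : Type*} [Ring A] {m : ℕ}

lemma colMat_eq_one_add_sum (v : Fin m → A) :
    colMat m A v = 1 + ∑ k, single k.castSucc (Fin.last m) (v k) := by
  ext p q
  simp only [colMat, of_apply, Matrix.add_apply, one_apply, Matrix.sum_apply, single_apply]
  congr 1
  induction p using Fin.lastCases with
  | last => simp [Fin.castSucc_ne_last]
  | cast p =>
    rw [Finset.sum_eq_single p (fun k _ hk => by simp [hk]) (by simp)]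
    simp [Fin.ext_iff, eq_comm]

lemma colMat_mul_colMat (v w : Fin m → A) : colMat m A v * colMat m A w = colMat m A (v + w) := by
  simp only [colMat_eq_one_add_sum, mul_add, add_mul, one_mul, mul_one, Finset.sum_mul_sum,
    single_mul_single_of_ne _ _ _ _ (Fin.castSucc_ne_last _).symm, Finset.sum_const_zero,
    add_zero, Pi.add_apply, single_add, Finset.sum_add_distrib]
  abel

lemma colMat_single (k : Fin m) (a : A) :
    colMat m A (Pi.single k a) = elemMat (m + 1) A k.castSucc (Fin.last m) a := by
  rw [colMat_eq_one_add_sum, elemMat, Finset.sum_eq_single k (fun k' _ hk' => by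
    rw [Pi.single_eq_of_ne hk', single_zero]) (by simp), Pi.single_eq_same]

variable (A m) in
def colMatHom : Multiplicative (Fin m → A) →* MatA (m + 1) A where
  toFun v := colMat m A v.toAdd
  map_one' := by simp [colMat_eq_one_add_sum]
  map_mul' v w := (colMat_mul_colMat _ _).symm

lemma colMat_eq_prod (v : Fin m → A) :
    colMat m A v = (List.ofFn fun k => (colElem A k (v k)).val.val).prod := by
  calc colMat m A v = colMatHom A m (∏ k, Multiplicative.ofAdd (Pi.single k (v k))) := by
        rw [← ofAdd_sum, Finset.univ_sum_single]; rfl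
    _ = _ := by
        rw [← List.prod_ofFn, map_list_prod, List.map_ofFn]
        congr 2
        ext1 k
        exact colMat_single k (v k)

lemma eq_prod_colElem_of_mem_colSet {h : upperGrp m A} (hh : h.val ∈ colSet m A) :
    ∃ v : Fin m → A, h = (List.ofFn fun k => colElem A k (v k)).prod := by
  obtain ⟨v, hv⟩ := hh
  refine ⟨v, Subtype.ext (Units.ext ?_)⟩
  have := map_list_prod ((Units.coeHom (MatA (m + 1) A)).comp (upperGrp m A).subtype)
    (List.ofFn fun k => colElem A k (v k))
  simp only [List.map_ofFn] at this
  rw [hv, colMat_eq_prod]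
  exact this.symm

end ColumnMatrices

section Extension

variable {A : Type*} [Ring A] {m : ℕ}

/-- Insert a new row and column at index `k`, with `1` on the diagonal. -/
def extendMat (k : Fin (m + 1)) (M : MatA m A) : MatA (m + 1) A :=
  Matrix.of (k.insertNth (Pi.single k 1) fun i => k.insertNth 0 (M i))

@[simp] lemma extendMat_self_self (k : Fin (m + 1)) (M : MatA m A) : extendMat k M k k = 1 := by
  simp [extendMat]

@[simp] lemma extendMat_self_succAbove (k : Fin (m + 1)) (M : MatA m A) (j : Fin m) :
    extendMat k M k (k.succAbove j) = 0 := by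
  simp [extendMat, Fin.succAbove_ne]

@[simp] lemma extendMat_succAbove_self (k : Fin (m + 1)) (M : MatA m A) (i : Fin m) :
    extendMat k M (k.succAbove i) k = 0 := by
  simp [extendMat]

@[simp] lemma extendMat_succAbove_succAbove (k : Fin (m + 1)) (M : MatA m A) (i j : Fin m) :
    extendMat k M (k.succAbove i) (k.succAbove j) = M i j := by
  simp [extendMat]

lemma extendMat_one (k : Fin (m + 1)) : extendMat k (1 : MatA m A) = 1 := by
  ext p q
  cases p using Fin.succAboveCases k <;> cases q using Fin.succAboveCases k <;>
    simp [one_apply, Fin.succAbove_ne, (Fin.succAbove_ne _ _).symm]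

lemma extendMat_mul (k : Fin (m + 1)) (M N : MatA m A) :
    extendMat k (M * N) = extendMat k M * extendMat k N := by
  ext p q
  rw [Matrix.mul_apply, Fin.sum_univ_succAbove _ k]
  cases p using Fin.succAboveCases k <;> cases q using Fin.succAboveCases k <;>
    simp [Matrix.mul_apply]

variable (A) in
def extendHom (k : Fin (m + 1)) : MatA m A →* MatA (m + 1) A where
  toFun := extendMat k
  map_one' := extendMat_one k
  map_mul' := extendMat_mul k

lemma extendMat_elemMat (k : Fin (m + 1)) (i j : Fin m) (a : A) :
    extendMat k (elemMat m A i j a) = elemMat (m + 1) A (k.succAbove i) (k.succAbove j) a := by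
  ext p q
  cases p using Fin.succAboveCases k <;> cases q using Fin.succAboveCases k <;>
    simp [elemMat, one_apply, single_apply, Fin.succAbove_ne,
      (Fin.succAbove_ne _ _).symm]

lemma continuous_extendMat [TopologicalSpace A] (k : Fin (m + 1)) :
    Continuous (extendMat (A := A) k) := by
  refine continuous_matrix fun p q => ?_
  cases p using Fin.succAboveCases k <;> cases q using Fin.succAboveCases k <;>
    simp only [extendMat_self_self, extendMat_self_succAbove, extendMat_succAbove_self,
      extendMat_succAbove_succAbove] <;>
    fun_prop

end Extension

section LastRow

variable {A : Type*} [Ring A] {m : ℕ}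

variable (A m) in
/-- The units whose last row is `(0, …, 0, 1)`. -/
def lastRowStabilizer : Subgroup (MatA (m + 1) A)ˣ where
  carrier := {u | Pi.single (Fin.last m) 1 ᵥ* u.val = Pi.single (Fin.last m) 1}
  mul_mem' {u v} hu hv := by
    simp only [Set.mem_ofPred_eq, Units.val_mul, ← vecMul_vecMul] at *
    rw [hu, hv]
  one_mem' := vecMul_one _
  inv_mem' {u} hu := by
    simp only [Set.mem_ofPred_eq] at *
    conv_lhs => rw [← hu]
    rw [vecMul_vecMul, Units.mul_inv, vecMul_one]

lemma upperGrp_le_lastRowStabilizer : upperGrp m A ≤ lastRowStabilizer A m := by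
  refine (Subgroup.closure_le _).2 ?_
  rintro u ⟨i, j, a, -, hi, hu⟩
  have hi : i ≠ Fin.last m := fun h => by simp [h] at hi
  ext q
  simp [hu, elemMat, one_apply, Pi.single_apply, hi, eq_comm]

lemma eq_zero_of_elemMat_last_mem {u : (MatA (m + 1) A)ˣ} (hu : u ∈ upperGrp m A)
    {j : Fin (m + 1)} (hj : Fin.last m ≠ j) {q : A}
    (h : u.val = elemMat (m + 1) A (Fin.last m) j q) : q = 0 := by
  have := congr_fun (upperGrp_le_lastRowStabilizer hu) j
  simpa [h, elemMat, vecMul_add, hj.symm] using this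

lemma eq_one_or_eq_elem {s : upperGrp m A} {i j : Fin (m + 1)} (hij : i ≠ j) {q : A}
    (hs : s.val.val = elemMat (m + 1) A i j q) :
    s = 1 ∨ ∃ (i' : Fin m) (h : i'.castSucc ≠ j), s = elem A i' h q := by
  cases i using Fin.lastCases with
  | last =>
    left
    rw [eq_zero_of_elemMat_last_mem s.2 hij hs, elemMat_zero] at hs
    exact Subtype.ext (Units.ext hs)
  | cast i' => exact Or.inr ⟨i', hij, Subtype.ext (Units.ext hs)⟩

end LastRow

section Embedding

variable {A : Type*} [Ring A] {n : ℕ}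

lemma castSucc_succAbove_last (k : Fin (n + 1)) :
    k.castSucc.succAbove (Fin.last n) = Fin.last (n + 1) := by
  rw [Fin.succAbove_castSucc_of_le _ _ (Fin.le_last k), Fin.succ_last]

lemma succAbove_castSucc_ne {k : Fin (n + 1)} {i : Fin n} {j : Fin (n + 1)} (hij : i.castSucc ≠ j) :
    (k.succAbove i).castSucc ≠ k.castSucc.succAbove j := by
  rw [← Fin.castSucc_succAbove_castSucc]
  exact Fin.succAbove_right_injective.ne hij

lemma upperGrp_le_comap_extendHom (k : Fin (n + 1)) :
    upperGrp n A ≤ (upperGrp (n + 1) A ⊓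
      Subgroup.centralizer (Set.range fun a => (colElem A k a).val)).comap
        (Units.map (extendHom A k.castSucc)) := by
  refine (Subgroup.closure_le _).2 ?_
  rintro u ⟨i₀, j, a, hij, hi, hu⟩
  obtain ⟨i, rfl⟩ : ∃ i : Fin n, i.castSucc = i₀ := ⟨⟨i₀, hi⟩, rfl⟩
  have hval : (Units.map (extendHom A k.castSucc) u).val
      = elemMat (n + 2) A (k.succAbove i).castSucc (k.castSucc.succAbove j) a := by
    simp [extendHom, hu, extendMat_elemMat, Fin.castSucc_succAbove_castSucc]
  refine ⟨Subgroup.subset_closure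
    ⟨_, _, a, succAbove_castSucc_ne hij, (k.succAbove i).isLt, hval⟩,
    Subgroup.mem_centralizer_iff.2 ?_⟩
  rintro _ ⟨b, rfl⟩
  refine Units.ext ?_
  rw [Units.val_mul, Units.val_mul, hval]
  exact elemMat_commute (Fin.castSucc_ne_last _).symm (Fin.succAbove_ne _ _) b a

variable (A) in
def embed (k : Fin (n + 1)) : upperGrp n A →* upperGrp (n + 1) A :=
  ((Units.map (extendHom A k.castSucc)).comp (upperGrp n A).subtype).codRestrict _
    fun s => (upperGrp_le_comap_extendHom k s.2).1

lemma embed_val (k : Fin (n + 1)) (s : upperGrp n A) :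
    (embed A k s).val.val = extendMat k.castSucc s.val.val := rfl

lemma commute_embed_colElem (k : Fin (n + 1)) (s : upperGrp n A) (a : A) :
    Commute (embed A k s) (colElem A k a) :=
  Subtype.ext (Subgroup.mem_centralizer_iff.1 (upperGrp_le_comap_extendHom k s.2).2 _
    ⟨a, rfl⟩).symm

lemma embed_elem (k : Fin (n + 1)) {i : Fin n} {j : Fin (n + 1)} (hij : i.castSucc ≠ j) (q : A) :
    embed A k (elem A i hij q) = elem A (k.succAbove i) (succAbove_castSucc_ne hij) q :=
  Subtype.ext <| Units.ext <| by
    simp [embed_val, elem, elemUnit, extendMat_elemMat, Fin.castSucc_succAbove_castSucc]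

lemma embed_colElem (k : Fin (n + 1)) (i : Fin n) (b : A) :
    embed A k (colElem A i b) = colElem A (k.succAbove i) b := by
  simp only [colElem, embed_elem, castSucc_succAbove_last]

lemma continuous_embed [TopologicalSpace A] (k : Fin (n + 1)) : Continuous (embed A k) := by
  refine Continuous.subtype_mk (Units.continuous_iff.2 ⟨?_, ?_⟩) _
  · exact (continuous_extendMat k.castSucc).comp (Units.continuous_val.comp continuous_subtype_val)
  · exact (continuous_extendMat k.castSucc).comp
      (Units.continuous_coe_inv.comp continuous_subtype_val)

end Embedding

section ColumnBounds

variable {A X : Type*} [Ring A] [NormedAddCommGroup X] [NormedSpace ℝ X] {m : ℕ}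
  {ρ : upperGrp m A →* (X ≃ₗᵢ[ℝ] X)} {c : upperGrp m A → X} {Δ L : ℝ}

lemma colElem_pow (k : Fin m) (a : A) (t : ℕ) : colElem A k a ^ t = colElem A k (t • a) :=
  elem_pow _ _ _ _

lemma colElem_eq_commutator {k k' : Fin m} (hkk' : k ≠ k') (a b : A) :
    colElem A k (a * b) = ⁅elem A k ((Fin.castSucc_injective _).ne hkk') a, colElem A k' b⁆ :=
  (elem_commutator _ _ _ a b).symm

lemma IsQuasiCocycle.norm_map_colElem_apply_sub_le (hc : IsQuasiCocycle ρ c Δ)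
    (hL : ∀ i j (h : Fin.castSucc i ≠ j), ‖c (elem A i h 1)‖ ≤ L) {k k' : Fin m} (hkk' : k ≠ k')
    {C : ℝ} (hC : ∀ a b, ‖ρ (colElem A k' b) (c (colElem A k a)) - c (colElem A k a)‖ ≤ C)
    (a b : A) :
    ‖ρ (colElem A k b) (c (colElem A k a)) - c (colElem A k a)‖ ≤ 4 * (L + Δ) + 2 * C := by
  have hne : k.castSucc ≠ k'.castSucc := (Fin.castSucc_injective _).ne hkk'
  have hcomm : Commute (elem A k hne 1) (colElem A k a) :=
    elem_commute _ _ ((Fin.castSucc_injective _).ne hkk'.symm) (Fin.castSucc_ne_last k).symm 1 a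
  rw [← one_mul b, colElem_eq_commutator hkk']
  linarith [norm_map_commutatorElement_apply_sub_le ρ (elem A k hne 1) (colElem A k' b)
    (c (colElem A k a)), hc.norm_map_apply_sub_le_of_commute hcomm, hL k _ hne, hC a b]

lemma IsQuasiCocycle.norm_colElem_natCast_mul_le (hc : IsQuasiCocycle ρ c Δ)
    (hL : ∀ i j (h : Fin.castSucc i ≠ j), ‖c (elem A i h 1)‖ ≤ L) {k k' : Fin m} (hkk' : k ≠ k')
    (t : ℕ) (a : A) :
    ‖c (colElem A k ((t : A) * a))‖ ≤ 2 * ‖c (colElem A k' a)‖ + 2 * t * (L + Δ) + 9 * Δ := by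
  have hne : k.castSucc ≠ k'.castSucc := (Fin.castSucc_injective _).ne hkk'
  have hpow : elem A k hne (t : A) = elem A k hne 1 ^ t := by rw [elem_pow, nsmul_one]
  have hmul : (t : ℝ) * (‖c (elem A k hne 1)‖ + Δ) ≤ t * (L + Δ) := by
    gcongr
    exact hL _ _ _
  rw [colElem_eq_commutator hkk']
  linarith [hc.norm_commutatorElement_le (elem A k hne (t : A)) (colElem A k' a),
    hpow ▸ hc.norm_pow_le (elem A k hne 1) t]

lemma IsQuasiCocycle.exists_norm_colElem_le (hc : IsQuasiCocycle ρ c Δ)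
    (hL : ∀ i j (h : Fin.castSucc i ≠ j), ‖c (elem A i h 1)‖ ≤ L) {k k' : Fin m} (hkk' : k ≠ k')
    {C : ℝ} (hC : ∀ a b, ‖ρ (colElem A k' b) (c (colElem A k a)) - c (colElem A k a)‖ ≤ C) :
    ∃ K, ∀ a, ‖c (colElem A k a)‖ ≤ K := by
  refine ⟨18 * (L + Δ) + 37 * Δ + 9 * (4 * (L + Δ) + 2 * C), fun a => ?_⟩
  have hpow := hc.natCast_mul_norm_le (g := colElem A k a) (fun t => by
    rw [colElem_pow]; exact hc.norm_map_colElem_apply_sub_le hL hkk' hC a _) 9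
  rw [colElem_pow, show (9 : ℕ) • a = ((3 : ℕ) : A) * (((3 : ℕ) : A) * a) by
    rw [← mul_assoc, ← Nat.cast_mul, nsmul_eq_mul]] at hpow
  have h₁ := hc.norm_colElem_natCast_mul_le hL hkk' 3 (((3 : ℕ) : A) * a)
  have h₂ := hc.norm_colElem_natCast_mul_le hL hkk'.symm 3 a
  push_cast at hpow h₁ h₂
  linarith [norm_nonneg (c (colElem A k a))]

end ColumnBounds

section Transfer

variable {A X : Type*} [Ring A] [TopologicalSpace A] [NormedAddCommGroup X] [NormedSpace ℝ X]

variable (A X) in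
def WeakRelativePropertyT (n : ℕ) (Q : Set A) : Prop :=
  ∀ (ρ : ↥(upperGrp n A) →* (X ≃ₗᵢ[ℝ] X)), (∀ x : X, Continuous fun g => ρ g x) →
    ∃ ε : ℝ, 0 < ε ∧ ∀ (ξ : X) (b : ℝ),
      (∀ s : ↥(upperGrp n A),
        (∃ (i j : Fin (n + 1)) (q : A), i ≠ j ∧ q ∈ Q ∧
          s.val.val = elemMat (n + 1) A i j q) →
        ‖ρ s ξ - ξ‖ ≤ b) →
      ∀ h : ↥(upperGrp n A), h.val ∈ colSet n A →
        ε * ‖ρ h ξ - ξ‖ ≤ b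

lemma IsQuasiCocycle.exists_norm_map_colElem_apply_sub_le {n : ℕ} {Q : Set A}
    (hT : WeakRelativePropertyT A X n Q) {ρ : upperGrp (n + 1) A →* (X ≃ₗᵢ[ℝ] X)}
    (hρ : ∀ x, Continuous fun g => ρ g x) {c : upperGrp (n + 1) A → X} {Δ L : ℝ}
    (hc : IsQuasiCocycle ρ c Δ) (hL₀ : 0 ≤ L)
    (hL : ∀ i j (h : Fin.castSucc i ≠ j), ∀ q ∈ Q, ‖c (elem A i h q)‖ ≤ L)
    {k i : Fin (n + 1)} (hik : i ≠ k) :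
    ∃ C, ∀ a b, ‖ρ (colElem A i b) (c (colElem A k a)) - c (colElem A k a)‖ ≤ C := by
  obtain ⟨i, rfl⟩ := Fin.exists_succAbove_eq hik
  obtain ⟨ε, hε, hεT⟩ := hT (ρ.comp (embed A k)) fun x => (hρ x).comp (continuous_embed k)
  refine ⟨(2 * L + 2 * Δ) / ε, fun a b => ?_⟩
  have hgen : ∀ s : upperGrp n A, (∃ (i j : Fin (n + 1)) (q : A), i ≠ j ∧ q ∈ Q ∧
      s.val.val = elemMat (n + 1) A i j q) →
      ‖ρ (embed A k s) (c (colElem A k a)) - c (colElem A k a)‖ ≤ 2 * L + 2 * Δ := by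
    rintro s ⟨i₀, j, q, hij, hq, hs⟩
    rcases eq_one_or_eq_elem hij hs with rfl | ⟨i', h, rfl⟩
    · simp only [map_one, LinearIsometryEquiv.coe_one, id, sub_self, norm_zero]
      linarith [hc.nonneg]
    · have hcomm := commute_embed_colElem k (elem A i' h q) a
      rw [embed_elem] at hcomm ⊢
      linarith [hc.norm_map_apply_sub_le_of_commute hcomm,
        hL _ _ (succAbove_castSucc_ne (k := k) h) q hq]
  have := hεT (c (colElem A k a)) _ hgen (colElem A i b) ⟨Pi.single i b, (colMat_single i b).symm⟩
  rw [MonoidHom.comp_apply, embed_colElem] at this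
  rwa [le_div_iff₀ hε, mul_comm]

end Transfer

theorem stmt17_general (A : Type*) [Ring A] [TopologicalSpace A] [IsTopologicalRing A]
    (Q : Set A) (hQcompact : IsCompact Q) (hQ1 : (1 : A) ∈ Q)
    (X : Type*) [NormedAddCommGroup X] [NormedSpace ℝ X]
    (n : ℕ) (hn : 2 ≤ n)
    (hwT : ∀ (ρ : ↥(upperGrp n A) →* (X ≃ₗᵢ[ℝ] X)), (∀ x : X, Continuous fun g => ρ g x) →
      ∃ ε : ℝ, 0 < ε ∧ ∀ (ξ : X) (b : ℝ),
        (∀ s : ↥(upperGrp n A),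
          (∃ (i j : Fin (n + 1)) (q : A), i ≠ j ∧ q ∈ Q ∧
            s.val.val = elemMat (n + 1) A i j q) →
          ‖ρ s ξ - ξ‖ ≤ b) →
        ∀ h : ↥(upperGrp n A), h.val ∈ colSet n A →
          ε * ‖ρ h ξ - ξ‖ ≤ b) :
    ∀ (ρ : ↥(upperGrp (n + 1) A) →* (X ≃ₗᵢ[ℝ] X)), (∀ x : X, Continuous fun g => ρ g x) →
      ∀ c : ↥(upperGrp (n + 1) A) → X, Continuous c →
        (∃ Δ : ℝ, ∀ g h : ↥(upperGrp (n + 1) A), ‖c (g * h) - c g - ρ g (c h)‖ ≤ Δ) →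
        ∃ M : ℝ, ∀ h : ↥(upperGrp (n + 1) A),
          h.val ∈ colSet (n + 1) A → ‖c h‖ ≤ M := by
  rintro ρ hρ c hc ⟨Δ, hΔ : IsQuasiCocycle ρ c Δ⟩
  have : Nontrivial (Fin (n + 1)) := Fin.nontrivial_iff_two_le.2 (by omega)
  obtain ⟨L, hL₀, hL⟩ := exists_norm_elem_le hQcompact hc
  have hK : ∀ k, ∃ K, ∀ a, ‖c (colElem A k a)‖ ≤ K := fun k => by
    obtain ⟨k', hk'⟩ := exists_ne k
    obtain ⟨C, hC⟩ := hΔ.exists_norm_map_colElem_apply_sub_le hwT hρ hL₀ hL hk'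
    exact hΔ.exists_norm_colElem_le (fun i j h => hL i j h 1 hQ1) hk'.symm hC
  choose K hK using hK
  obtain ⟨K₀, hK₀⟩ := (Set.finite_range K).bddAbove
  refine ⟨(n + 1) * (K₀ + Δ) + Δ, fun h hh => ?_⟩
  obtain ⟨v, rfl⟩ := eq_prod_colElem_of_mem_colSet hh
  simpa using hΔ.norm_list_prod_le (K := K₀) (l := List.ofFn fun k => colElem A k (v k))
    fun g hg => by
      obtain ⟨k, rfl⟩ := List.mem_ofFn.1 hg
      exact (hK k (v k)).trans (hK₀ ⟨k, rfl⟩)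

/-- Proposition 5.5 (`fromttoffpp`): if the pair `E(n,A) ⋉ Aⁿ > Aⁿ` has weak relative
property (T_X) (with respect to the compact elementary generating set coming from `Q`),
then the pair `E(n+1,A) ⋉ A^{n+1} > A^{n+1}` has relative property (FF_X): every
quasi-1-cocycle is bounded on `A^{n+1}`. -/
theorem stmt17 (A : Type*) [Ring A] [TopologicalSpace A] [IsTopologicalRing A]
    (Q : Set A) (hQcompact : IsCompact Q) (hQ1 : (1 : A) ∈ Q) (hQsym : Q = -Q)
    (hQgen : Subring.closure Q = ⊤)
    (X : Type*) [NormedAddCommGroup X] [NormedSpace ℝ X] [CompleteSpace X]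
    (n : ℕ) (hn : 2 ≤ n)
    (hwT : ∀ (ρ : ↥(upperGrp n A) →* (X ≃ₗᵢ[ℝ] X)), (∀ x : X, Continuous fun g => ρ g x) →
      ∃ ε : ℝ, 0 < ε ∧ ∀ (ξ : X) (b : ℝ),
        (∀ s : ↥(upperGrp n A),
          (∃ (i j : Fin (n + 1)) (q : A), i ≠ j ∧ q ∈ Q ∧
            s.val.val = elemMat (n + 1) A i j q) →
          ‖ρ s ξ - ξ‖ ≤ b) →
        ∀ h : ↥(upperGrp n A), h.val ∈ colSet n A →
          ε * ‖ρ h ξ - ξ‖ ≤ b) :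
    ∀ (ρ : ↥(upperGrp (n + 1) A) →* (X ≃ₗᵢ[ℝ] X)), (∀ x : X, Continuous fun g => ρ g x) →
      ∀ c : ↥(upperGrp (n + 1) A) → X, Continuous c →
        (∃ Δ : ℝ, ∀ g h : ↥(upperGrp (n + 1) A), ‖c (g * h) - c g - ρ g (c h)‖ ≤ Δ) →
        ∃ M : ℝ, ∀ h : ↥(upperGrp (n + 1) A),
          h.val ∈ colSet (n + 1) A → ‖c h‖ ≤ M :=
  stmt17_general A Q hQcompact hQ1 X n hn hwT
end
end

section
/- Let (Ω, μ) be a probability space, let X be a Banach space, let k ≥ 1 be an integer and let D ≥ 1. Assume that every subspace E of X with 1 ≤ dim E ≤ k admits a linear isomorphism u from E onto the Euclidean space ℝ^{dim E} (standard Euclidean norm) with ‖u‖·‖u⁻¹‖ ≤ D. Then every subspace F of the Bochner space L²(Ω, μ; X) with 1 ≤ dim F ≤ k admits a linear isomorphism v from F onto the Euclidean space ℝ^{dim F} with ‖v‖·‖v⁻¹‖ ≤ 2D. (In the notation of the paper: d_k(L²(Ω, μ; X)) ≤ 2·d_k(X), where d_k(Y) is the supremum of the Banach–Mazur distances to Euclidean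 space of the at-most-k-dimensional subspaces of Y. In particular, if X satisfies d_k(X) ≤ C·k^β for all k ≥ 1, then L²(Ω, μ; X) satisfies the same condition with constant 2C.) -/
/-!
Approximate a basis of `F ⊆ L²(Ω, μ; X)` by simple functions `gᵢ` so closely that
`S f = ∑ᵢ cᵢ(f) gᵢ` (with `cᵢ` the coordinate functionals) satisfies `‖S f - f‖ ≤ ‖f‖ / 3`.
The `gᵢ` jointly take finitely many values `y ∈ Xⁿ`, on sets `A_y`, so
`‖S f‖² = ∑_y μ(A_y) ‖∑ᵢ cᵢ(f) yᵢ‖²`. Each `span {y₁, …, yₙ}` has dimension at most `k`, hence a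
`D`-isomorphism `w_y` onto a Euclidean space, and `f ↦ (√μ(A_y) · w_y (∑ᵢ cᵢ(f) yᵢ))_y` maps `F`
into the ℓ²-sum of these Euclidean spaces with distortion at most `D` relative to `‖S f‖`.
Since `2/3 ‖f‖ ≤ ‖S f‖ ≤ 4/3 ‖f‖`, the distortion relative to `‖f‖` is at most `2D`.
-/

open MeasureTheory Module

theorem exists_euclidean_equiv_of_bounds {F H : Type*} [NormedAddCommGroup F] [NormedSpace ℝ F]
    [FiniteDimensional ℝ F] [NormedAddCommGroup H] [InnerProductSpace ℝ H] (T : F →ₗ[ℝ] H)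
    {a b : ℝ} (ha : 0 < a) (hb : 0 ≤ b) (hlow : ∀ f, a * ‖f‖ ≤ ‖T f‖) (hup : ∀ f, ‖T f‖ ≤ b * ‖f‖) :
    ∃ v : F ≃L[ℝ] EuclideanSpace ℝ (Fin (finrank ℝ F)),
      ‖(v : F →L[ℝ] EuclideanSpace ℝ (Fin (finrank ℝ F)))‖ *
        ‖(v.symm : EuclideanSpace ℝ (Fin (finrank ℝ F)) →L[ℝ] F)‖ ≤ b / a := by
  have hinj : Function.Injective T := by
    refine (injective_iff_map_eq_zero T).2 fun f hf => norm_le_zero_iff.1 ?_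
    have := hlow f
    rw [hf, norm_zero] at this
    nlinarith [norm_nonneg f]
  let e : F ≃ₗ[ℝ] LinearMap.range T := LinearEquiv.ofInjective T hinj
  let o := (stdOrthonormalBasis ℝ (LinearMap.range T)).reindex (finCongr e.finrank_eq.symm)
  let v := (e ≪≫ₗ o.repr.toLinearEquiv).toContinuousLinearEquiv
  have hv : ∀ f, ‖v f‖ = ‖T f‖ := fun f => o.repr.norm_map (e f)
  refine ⟨v, ?_⟩
  calc _ ≤ b * a⁻¹ := by
        gcongr
        · exact ContinuousLinearMap.opNorm_le_bound _ hb fun f => (hv f).trans_le (hup f)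
        · refine ContinuousLinearMap.opNorm_le_bound _ (by positivity) fun y => ?_
          rw [inv_mul_eq_div, le_div_iff₀ ha, mul_comm]
          simpa [← hv] using hlow (v.symm y)
    _ = b / a := div_eq_mul_inv b a |>.symm

theorem exists_linearMap_piLp_two_norm_sq {ι V : Type*} [Fintype ι] [AddCommGroup V]
    [Module ℝ V] {H : ι → Type*} [∀ i, SeminormedAddCommGroup (H i)] [∀ i, NormedSpace ℝ (H i)]
    (m : ι → ℝ) (hm : ∀ i, 0 ≤ m i) (W : ∀ i, V →ₗ[ℝ] H i) :
    ∃ T : V →ₗ[ℝ] PiLp 2 H, ∀ v, ‖T v‖ ^ 2 = ∑ i, m i * ‖W i v‖ ^ 2 := by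
  refine ⟨(WithLp.linearEquiv 2 ℝ (∀ i, H i)).symm.toLinearMap ∘ₗ
    LinearMap.pi fun i => √(m i) • W i, fun v => ?_⟩
  rw [PiLp.norm_sq_eq_of_L2]
  refine Finset.sum_congr rfl fun i _ => ?_
  simp [norm_smul, mul_pow, Real.sq_sqrt (hm i)]

def MeasureTheory.SimpleFunc.pi {Ω ι : Type*} {X : ι → Type*} [MeasurableSpace Ω] [Finite ι]
    (φ : ∀ i, SimpleFunc Ω (X i)) :
    SimpleFunc Ω (∀ i, X i) where
  toFun ω i := φ i ω
  measurableSet_fiber' c := by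
    have : (fun ω i => φ i ω) ⁻¹' {c} = ⋂ i, φ i ⁻¹' {c i} := by
      ext ω
      simp [funext_iff]
    rw [this]
    exact .iInter fun i => (φ i).measurableSet_fiber _
  finite_range' :=
    (Set.Finite.pi' fun i => (φ i).finite_range).subset <| by
      rintro _ ⟨ω, rfl⟩ i
      exact ⟨ω, rfl⟩

theorem Module.Basis.exists_near_of_dense {Y : Type*} [NormedAddCommGroup Y] [NormedSpace ℝ Y]
    {F : Submodule ℝ Y} [FiniteDimensional ℝ F] {ι : Type*} [Fintype ι] (b : Basis ι ℝ F)
    {s : Set Y} (hs : Dense s) {δ : ℝ} (hδ : 0 < δ) :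
    ∃ g : ι → Y, (∀ i, g i ∈ s) ∧ ∀ f : F, ‖∑ i, b.equivFun f i • g i - f‖ ≤ δ * ‖f‖ := by
  set C := ‖(LinearMap.toContinuousLinearMap b.equivFun.toLinearMap : F →L[ℝ] ι → ℝ)‖
  set ε := δ / (Fintype.card ι * C + 1)
  have hε : 0 < ε := by positivity
  have hεδ : Fintype.card ι * C * ε ≤ δ := by
    rw [mul_div_assoc', div_le_iff₀ (by positivity)]
    linarith
  have hcoord : ∀ f i, |b.equivFun f i| ≤ C * ‖f‖ := fun f i =>
    (norm_le_pi_norm (b.equivFun f) i).trans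
      ((LinearMap.toContinuousLinearMap b.equivFun.toLinearMap).le_opNorm f)
  choose g hgs hg using fun i => Metric.mem_closure_iff.1 (hs (b i : Y)) ε hε
  refine ⟨g, hgs, fun f => ?_⟩
  have hf : (f : Y) = ∑ i, b.equivFun f i • (b i : Y) := by
    nth_rw 1 [← b.sum_equivFun f]
    simp only [Submodule.coe_sum, Submodule.coe_smul]
  calc ‖∑ i, b.equivFun f i • g i - f‖
      = ‖∑ i, b.equivFun f i • (g i - b i)‖ := by
        simp only [hf, smul_sub, Finset.sum_sub_distrib]
    _ ≤ ∑ i, |b.equivFun f i| * ‖g i - b i‖ := by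
        refine (norm_sum_le _ _).trans_eq (Finset.sum_congr rfl fun i _ => ?_)
        rw [_root_.norm_smul, Real.norm_eq_abs]
    _ ≤ ∑ _i : ι, C * ‖f‖ * ε := by
        gcongr with i
        · exact hcoord f i
        · rw [← dist_eq_norm, dist_comm]
          exact (hg i).le
    _ = Fintype.card ι * C * ε * ‖f‖ := by
        simp only [Finset.sum_const, Finset.card_univ, nsmul_eq_mul]
        ring
    _ ≤ δ * ‖f‖ := by gcongr

theorem MeasureTheory.Lp.norm_sq_eq_sum_of_ae_eq_comp {Ω X Z : Type*} [MeasurableSpace Ω]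
    {μ : Measure Ω} [IsFiniteMeasure μ] [NormedAddCommGroup X] (G : SimpleFunc Ω Z) (h : Z → X)
    {u : Lp X 2 μ} (hu : u =ᵐ[μ] h ∘ G) :
    ‖u‖ ^ 2 = ∑ z ∈ G.range, μ.real (G ⁻¹' {z}) * ‖h z‖ ^ 2 := by
  have hlint : eLpNorm (h ∘ G) 2 μ ^ (2 : ℝ) =
      ∑ z ∈ G.range, ‖h z‖ₑ ^ (2 : ℝ) * μ (G ⁻¹' {z}) := by
    have h2 := eLpNorm_nnreal_pow_eq_lintegral (μ := μ) (f := h ∘ G) (p := 2) two_ne_zero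
    push_cast at h2
    rw [h2, ← SimpleFunc.map_lintegral, ← SimpleFunc.lintegral_eq_lintegral,
      SimpleFunc.coe_map]
    rfl
  rw [Lp.norm_def, eLpNorm_congr_ae hu, ← Real.rpow_two, ENNReal.toReal_rpow, hlint,
    ENNReal.toReal_sum fun z _ => by finiteness]
  refine Finset.sum_congr rfl fun z _ => ?_
  rw [ENNReal.toReal_mul, mul_comm, ← ENNReal.toReal_rpow, toReal_enorm, Real.rpow_two,
    measureReal_def]

-- `d_k(X) ≤ D` in the paper's notation.
def SubspacesBanachMazurLE (X : Type*) [NormedAddCommGroup X] [NormedSpace ℝ X] (k : ℕ) (D : ℝ) :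
    Prop :=
  ∀ E : Submodule ℝ X, FiniteDimensional ℝ E → 1 ≤ finrank ℝ E → finrank ℝ E ≤ k →
    ∃ u : E ≃L[ℝ] EuclideanSpace ℝ (Fin (finrank ℝ E)),
      ‖(u : E →L[ℝ] EuclideanSpace ℝ (Fin (finrank ℝ E)))‖ *
        ‖(u.symm : EuclideanSpace ℝ (Fin (finrank ℝ E)) →L[ℝ] E)‖ ≤ D

theorem SubspacesBanachMazurLE.exists_linearMap_euclidean {X : Type*} [NormedAddCommGroup X]
    [NormedSpace ℝ X] {k : ℕ} {D : ℝ} (hX : SubspacesBanachMazurLE X k D) {V : Type*}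
    [AddCommGroup V] [Module ℝ V] [FiniteDimensional ℝ V] (L : V →ₗ[ℝ] X)
    (hL : finrank ℝ (LinearMap.range L) ≤ k) :
    ∃ (d : ℕ) (W : V →ₗ[ℝ] EuclideanSpace ℝ (Fin d)),
      ∀ v, ‖L v‖ ≤ ‖W v‖ ∧ ‖W v‖ ≤ D * ‖L v‖ := by
  rcases Nat.eq_zero_or_pos (finrank ℝ (LinearMap.range L)) with h0 | hpos
  · have hL0 : ∀ v, L v = 0 := fun v =>
      congrArg Subtype.val (Subsingleton.elim (h := finrank_zero_iff.mp h0) (L.rangeRestrict v) 0)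
    exact ⟨0, 0, fun v => by simp [hL0]⟩
  obtain ⟨u, hu⟩ := hX _ inferInstance hpos hL
  set e : LinearMap.range L →L[ℝ] EuclideanSpace ℝ (Fin (finrank ℝ (LinearMap.range L))) :=
    u.toContinuousLinearMap
  set e' : EuclideanSpace ℝ (Fin (finrank ℝ (LinearMap.range L))) →L[ℝ] LinearMap.range L :=
    u.symm.toContinuousLinearMap
  refine ⟨_, ‖e'‖ • e.toLinearMap ∘ₗ L.rangeRestrict, fun v => ?_⟩
  set x := L.rangeRestrict v
  have hx : ‖x‖ = ‖L v‖ := rfl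
  change ‖L v‖ ≤ ‖‖e'‖ • e x‖ ∧ ‖‖e'‖ • e x‖ ≤ D * ‖L v‖
  rw [norm_smul, Real.norm_of_nonneg (by positivity), ← hx]
  constructor
  · calc ‖x‖ = ‖e' (e x)‖ := by simp [e, e']
      _ ≤ ‖e'‖ * ‖e x‖ := e'.le_opNorm _
  · calc ‖e'‖ * ‖e x‖ ≤ ‖e'‖ * (‖e‖ * ‖x‖) := by gcongr; exact e.le_opNorm x
      _ = ‖e‖ * ‖e'‖ * ‖x‖ := by ring
      _ ≤ D * ‖x‖ := by gcongr

theorem SubspacesBanachMazurLE.exists_piLp_of_simpleFunc {Ω X ι : Type*} [MeasurableSpace Ω]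
    {μ : Measure Ω} [IsFiniteMeasure μ] [NormedAddCommGroup X] [NormedSpace ℝ X] [Fintype ι]
    {k : ℕ} {D : ℝ} (hX : SubspacesBanachMazurLE X k D) (hD : 0 ≤ D)
    (hι : Fintype.card ι ≤ k) (G : SimpleFunc Ω (ι → X)) :
    ∃ (d : G.range → ℕ) (T : (ι → ℝ) →ₗ[ℝ] PiLp 2 fun y : G.range => EuclideanSpace ℝ (Fin (d y))),
      ∀ (c : ι → ℝ) (u : Lp X 2 μ), u =ᵐ[μ] (fun ω => Fintype.linearCombination ℝ (G ω) c) →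
        ‖u‖ ≤ ‖T c‖ ∧ ‖T c‖ ≤ D * ‖u‖ := by
  have hrange (y : ι → X) : finrank ℝ (LinearMap.range (Fintype.linearCombination ℝ y)) ≤ k :=
    (LinearMap.finrank_range_le _).trans (by simpa using hι)
  choose d W hW using fun y : G.range => hX.exists_linearMap_euclidean _ (hrange y)
  obtain ⟨T, hT⟩ := exists_linearMap_piLp_two_norm_sq (fun y : G.range => μ.real (G ⁻¹' {y.1}))
    (fun _ => measureReal_nonneg) W
  refine ⟨d, T, fun c u hu => ?_⟩
  have hu2 := Lp.norm_sq_eq_sum_of_ae_eq_comp G (fun y => Fintype.linearCombination ℝ y c) hu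
  rw [← Finset.sum_coe_sort] at hu2
  have hlow : ‖u‖ ^ 2 ≤ ‖T c‖ ^ 2 := by
    rw [hu2, hT]
    gcongr with y
    exact (hW y c).1
  have hup : ‖T c‖ ^ 2 ≤ (D * ‖u‖) ^ 2 := by
    rw [hT, mul_pow, hu2, Finset.mul_sum]
    refine Finset.sum_le_sum fun y _ => ?_
    calc μ.real (G ⁻¹' {y.1}) * ‖W y c‖ ^ 2
        ≤ μ.real (G ⁻¹' {y.1}) * (D * ‖Fintype.linearCombination ℝ y.1 c‖) ^ 2 := by
          gcongr
          exact (hW y c).2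
      _ = D ^ 2 * (μ.real (G ⁻¹' {y.1}) * ‖Fintype.linearCombination ℝ y.1 c‖ ^ 2) := by ring
  exact ⟨(pow_le_pow_iff_left₀ (norm_nonneg _) (norm_nonneg _) two_ne_zero).1 hlow,
    (pow_le_pow_iff_left₀ (norm_nonneg _) (mul_nonneg hD (norm_nonneg _)) two_ne_zero).1 hup⟩

theorem SubspacesBanachMazurLE.Lp_two {Ω X : Type*} [MeasurableSpace Ω] {μ : Measure Ω}
    [IsFiniteMeasure μ] [NormedAddCommGroup X] [NormedSpace ℝ X] {k : ℕ} {D : ℝ}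
    (hX : SubspacesBanachMazurLE X k D) (hD : 0 ≤ D) :
    SubspacesBanachMazurLE (Lp X 2 μ) k (2 * D) := by
  intro F _ _ hFk
  let b := finBasis ℝ F
  obtain ⟨g, hg_simple, hg⟩ := b.exists_near_of_dense
    (Lp.simpleFunc.dense (E := X) (μ := μ) ENNReal.ofNat_ne_top) (δ := 1 / 3) (by norm_num)
  have hφ (i : Fin (finrank ℝ F)) : ∃ φ : SimpleFunc Ω X, g i =ᵐ[μ] φ :=
    ⟨_, (Lp.simpleFunc.toSimpleFunc_eq_toFun ⟨g i, hg_simple i⟩).symm⟩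
  choose φ hφ using hφ
  let G := SimpleFunc.pi φ
  obtain ⟨d, T, hT⟩ := hX.exists_piLp_of_simpleFunc (μ := μ) hD (by simpa using hFk) G
  have hS (c : Fin (finrank ℝ F) → ℝ) :
      ⇑(∑ i, c i • g i) =ᵐ[μ] fun ω => Fintype.linearCombination ℝ (G ω) c := by
    filter_upwards [Lp.coeFn_fun_finsetSum Finset.univ fun i => c i • g i, ae_all_iff.2 hφ,
      ae_all_iff.2 fun i => Lp.coeFn_smul (c i) (g i)] with ω hsum hφω hsmul
    rw [hsum, Fintype.linearCombination_apply]
    exact Finset.sum_congr rfl fun i _ => by rw [hsmul, Pi.smul_apply, hφω]; rfl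
  have hnear (f : F) : |‖∑ i, b.equivFun f i • g i‖ - ‖f‖| ≤ 1 / 3 * ‖f‖ :=
    (abs_norm_sub_norm_le _ _).trans (hg f)
  have hlow (f : F) : 2 / 3 * ‖f‖ ≤ ‖T (b.equivFun f)‖ := by
    have := (hT (b.equivFun f) _ (hS _)).1
    linarith [(abs_le.1 (hnear f)).1]
  have hup (f : F) : ‖T (b.equivFun f)‖ ≤ 4 / 3 * D * ‖f‖ := by
    have := (hT (b.equivFun f) _ (hS _)).2
    nlinarith [(abs_le.1 (hnear f)).2]
  obtain ⟨v, hv⟩ := exists_euclidean_equiv_of_bounds (T ∘ₗ b.equivFun.toLinearMap)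
    (by norm_num) (by positivity) hlow hup
  exact ⟨v, hv.trans_eq (by ring)⟩

theorem stmt19_general (Ω : Type*) [MeasurableSpace Ω] (μ : Measure Ω) [IsProbabilityMeasure μ]
    (X : Type*) [NormedAddCommGroup X] [NormedSpace ℝ X]
    (k : ℕ) (D : ℝ) (hD : 1 ≤ D)
    (hX : ∀ E : Submodule ℝ X, FiniteDimensional ℝ E →
      1 ≤ Module.finrank ℝ E → Module.finrank ℝ E ≤ k →
      ∃ u : ↥E ≃L[ℝ] EuclideanSpace ℝ (Fin (Module.finrank ℝ E)),
        ‖(u : ↥E →L[ℝ] EuclideanSpace ℝ (Fin (Module.finrank ℝ E)))‖ *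
          ‖(u.symm : EuclideanSpace ℝ (Fin (Module.finrank ℝ E)) →L[ℝ] ↥E)‖ ≤ D) :
    ∀ F : Submodule ℝ (Lp X 2 μ), FiniteDimensional ℝ F →
      1 ≤ Module.finrank ℝ F → Module.finrank ℝ F ≤ k →
      ∃ v : ↥F ≃L[ℝ] EuclideanSpace ℝ (Fin (Module.finrank ℝ F)),
        ‖(v : ↥F →L[ℝ] EuclideanSpace ℝ (Fin (Module.finrank ℝ F)))‖ *
          ‖(v.symm : EuclideanSpace ℝ (Fin (Module.finrank ℝ F)) →L[ℝ] ↥F)‖ ≤ 2 * D :=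
  SubspacesBanachMazurLE.Lp_two hX (zero_le_one.trans hD)

/-- If every subspace of `X` of dimension between 1 and `k` is `D`-isomorphic to a Euclidean
space, then every subspace of the Bochner space `L²(Ω,μ;X)` (for a probability measure `μ`)
of dimension between 1 and `k` is `2D`-isomorphic to a Euclidean space; i.e.
`d_k(L²(Ω,μ;X)) ≤ 2·d_k(X)`. -/
theorem stmt19 (Ω : Type*) [MeasurableSpace Ω] (μ : Measure Ω) [IsProbabilityMeasure μ]
    (X : Type*) [NormedAddCommGroup X] [NormedSpace ℝ X] [CompleteSpace X]
    (k : ℕ) (hk : 1 ≤ k) (D : ℝ) (hD : 1 ≤ D)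
    (hX : ∀ E : Submodule ℝ X, FiniteDimensional ℝ E →
      1 ≤ Module.finrank ℝ E → Module.finrank ℝ E ≤ k →
      ∃ u : ↥E ≃L[ℝ] EuclideanSpace ℝ (Fin (Module.finrank ℝ E)),
        ‖(u : ↥E →L[ℝ] EuclideanSpace ℝ (Fin (Module.finrank ℝ E)))‖ *
          ‖(u.symm : EuclideanSpace ℝ (Fin (Module.finrank ℝ E)) →L[ℝ] ↥E)‖ ≤ D) :
    ∀ F : Submodule ℝ (Lp X 2 μ), FiniteDimensional ℝ F →
      1 ≤ Module.finrank ℝ F → Module.finrank ℝ F ≤ k →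
      ∃ v : ↥F ≃L[ℝ] EuclideanSpace ℝ (Fin (Module.finrank ℝ F)),
        ‖(v : ↥F →L[ℝ] EuclideanSpace ℝ (Fin (Module.finrank ℝ F)))‖ *
          ‖(v.symm : EuclideanSpace ℝ (Fin (Module.finrank ℝ F)) →L[ℝ] ↥F)‖ ≤ 2 * D :=
  stmt19_general Ω μ X k D hD hX
end
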